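/- For every integer n ≥ 2, the function (t_1, …, t_n) ↦ 1/((1 − t_1)·t_2·t_3 ⋯ t_n) is integrable on the open simplex {(t_1, …, t_n) ∈ ℝⁿ : 0 < t_1 < t_2 < ⋯ < t_n < 1}, and its integral with respect to n-dimensional Lebesgue measure equals ζ(n). -/

import Mathlib

/-!
Expand `1 / (1 - t₁)` as the geometric series `∑ₖ t₁ᵏ`. Integrating out the smallest variable,
`∫₀^{t₂} t₁ᵏ dt₁ / t₂ = t₂ᵏ / (k + 1)`, so the `k`-th term keeps its shape while picking up a
factor `1 / (k + 1)` per variable, and after `n` steps it integrates to `1 / (k + 1)ⁿ`. Monotone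
convergence exchanges sum and integral; as the integrand is nonnegative, the finiteness of the
resulting lower integral `ζ(n)` gives integrability.
-/

open MeasureTheory Set ENNReal

theorem Fin.prod_univ_erase_zero {M : Type*} [CommMonoid M] {n : ℕ} (f : Fin (n + 1) → M) :
    ∏ i ∈ Finset.univ.erase 0, f i = ∏ i : Fin n, f i.succ := by
  rw [Fin.univ_succ, Finset.erase_cons, Finset.prod_map]
  rfl

theorem setLIntegral_Ioo_pow_div (k : ℕ) {a c : ℝ} (ha : 0 ≤ a) (hc : 0 ≤ c) :
    ∫⁻ y in Ioo 0 a, ENNReal.ofReal (y ^ k / c) = ENNReal.ofReal (a ^ (k + 1) / ((k + 1) * c)) := by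
  rw [← ofReal_integral_eq_lintegral_ofReal, ← integral_Ioc_eq_integral_Ioo,
    ← intervalIntegral.integral_of_le ha, intervalIntegral.integral_div, integral_pow]
  · simp [div_div]
  · exact (intervalIntegral.intervalIntegrable_pow k |>.div_const c).1.mono_set Ioo_subset_Ioc_self
  · filter_upwards [ae_restrict_mem measurableSet_Ioo] with y hy
    exact div_nonneg (pow_nonneg hy.1.le k) hc

theorem ofReal_one_div_one_sub_mul_eq_tsum {a c : ℝ} (ha₀ : 0 ≤ a) (ha₁ : a < 1) (hc : 0 ≤ c) :
    ENNReal.ofReal (1 / ((1 - a) * c)) = ∑' k : ℕ, ENNReal.ofReal (a ^ k / c) := by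
  rw [← ENNReal.ofReal_tsum_of_nonneg (fun k => by positivity)
    ((summable_geometric_of_lt_one ha₀ ha₁).div_const c), tsum_div_const,
    tsum_geometric_of_lt_one ha₀ ha₁, one_div, mul_inv, div_eq_mul_inv]

theorem integrable_and_integral_eq_of_lintegral_ofReal_eq {α : Type*} [MeasurableSpace α]
    {μ : Measure α} {f : α → ℝ} {c : ℝ} (hf : 0 ≤ᵐ[μ] f) (hfm : AEStronglyMeasurable f μ)
    (hc : 0 ≤ c) (h : ∫⁻ a, ENNReal.ofReal (f a) ∂μ = ENNReal.ofReal c) :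
    Integrable f μ ∧ ∫ a, f a ∂μ = c :=
  ⟨⟨hfm, (hasFiniteIntegral_iff_ofReal hf).2 (h ▸ ofReal_lt_top)⟩,
    by rw [integral_eq_lintegral_of_nonneg_ae hf hfm, h, toReal_ofReal hc]⟩

def openSimplex (n : ℕ) (x : ℝ) : Set (Fin n → ℝ) :=
  {t | StrictMono t ∧ ∀ i, t i ∈ Ioo 0 x}

section

variable {n : ℕ} {x : ℝ}

theorem measurableSet_openSimplex : MeasurableSet (openSimplex n x) := by
  refine measurableSet_setOfPred.2 (Measurable.and ?_ ?_)
  · exact Measurable.forall fun a => Measurable.forall fun b => measurable_const.imp <|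
      measurableSet_setOfPred.1 (measurableSet_lt (measurable_pi_apply a) (measurable_pi_apply b))
  · exact Measurable.forall fun i =>
      measurableSet_setOfPred.1 (measurable_pi_apply i measurableSet_Ioo)

theorem cons_mem_openSimplex_iff {y : ℝ} {r : Fin (n + 1) → ℝ} :
    Fin.cons y r ∈ openSimplex (n + 2) x ↔ r ∈ openSimplex (n + 1) x ∧ y ∈ Ioo 0 (r 0) := by
  simp only [openSimplex, mem_ofPred_eq, Fin.strictMono_cons, Fin.forall_fin_succ (n := n + 1),
    Fin.cons_zero, Fin.cons_succ, mem_Ioo]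
  constructor
  · rintro ⟨⟨hy, hr⟩, ⟨hy0, -⟩, hrI⟩
    exact ⟨⟨hr, hrI⟩, hy0, hy 0⟩
  · rintro ⟨⟨hr, hrI⟩, hy0, hyr⟩
    exact ⟨⟨fun j => hyr.trans_le (hr.monotone (Fin.zero_le j)), hr⟩,
      ⟨hy0, hyr.trans (hrI 0).2⟩, hrI⟩

theorem setLIntegral_openSimplex_one (f : (Fin 1 → ℝ) → ℝ≥0∞) :
    ∫⁻ t in openSimplex 1 x, f t = ∫⁻ y in Ioo 0 x, f (fun _ => y) := by
  have hpre : (MeasurableEquiv.funUnique (Fin 1) ℝ).symm ⁻¹' openSimplex 1 x = Ioo 0 x := by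
    ext y
    simp [openSimplex, Subsingleton.strictMono]
  rw [← hpre]
  exact (((volume_preserving_funUnique (Fin 1) ℝ).symm).setLIntegral_comp_preimage_emb
    (MeasurableEquiv.measurableEmbedding _) f _).symm

theorem indicator_openSimplex_cons (f : (Fin (n + 2) → ℝ) → ℝ≥0∞) (y : ℝ) (r : Fin (n + 1) → ℝ) :
    (openSimplex (n + 2) x).indicator f (Fin.cons y r) =
      (openSimplex (n + 1) x).indicator
        (fun r => (Ioo 0 (r 0)).indicator (fun y => f (Fin.cons y r)) y) r := by
  by_cases hr : r ∈ openSimplex (n + 1) x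
  · by_cases hy : y ∈ Ioo 0 (r 0)
    · simp [indicator_of_mem, hr, hy, cons_mem_openSimplex_iff]
    · simp [indicator_of_notMem, hr, hy, cons_mem_openSimplex_iff]
  · simp [indicator_of_notMem, hr, cons_mem_openSimplex_iff]

theorem setLIntegral_openSimplex_succ {f : (Fin (n + 2) → ℝ) → ℝ≥0∞} (hf : Measurable f) :
    ∫⁻ t in openSimplex (n + 2) x, f t =
      ∫⁻ r in openSimplex (n + 1) x, ∫⁻ y in Ioo 0 (r 0), f (Fin.cons y r) := by
  let e := (MeasurableEquiv.piFinSuccAbove (fun _ : Fin (n + 2) => ℝ) 0).symm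
  have he : ∀ p, e p = Fin.cons p.1 p.2 := fun p => Fin.insertNth_zero' p.1 p.2
  have hmeas := (hf.indicator (measurableSet_openSimplex (n := n + 2) (x := x))).comp e.measurable
  rw [← lintegral_indicator measurableSet_openSimplex,
    ← lintegral_indicator measurableSet_openSimplex,
    ← ((volume_preserving_piFinSuccAbove (fun _ : Fin (n + 2) => ℝ) 0).symm).lintegral_comp_emb
      e.measurableEmbedding, Measure.volume_eq_prod]
  refine (lintegral_prod_symm' _ hmeas).trans (lintegral_congr fun r => ?_)
  simp only [Function.comp_apply, he, indicator_openSimplex_cons]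
  by_cases hr : r ∈ openSimplex (n + 1) x
  · simp only [indicator_of_mem hr, lintegral_indicator measurableSet_Ioo]
  · simp only [indicator_of_notMem hr, lintegral_zero]

theorem setLIntegral_openSimplex_pow_div_prod (k : ℕ) (hx : 0 ≤ x) :
    ∫⁻ t in openSimplex (n + 1) x, ENNReal.ofReal (t 0 ^ k / ∏ i ∈ Finset.univ.erase 0, t i) =
      ENNReal.ofReal (x ^ (k + 1) / ((k : ℝ) + 1) ^ (n + 1)) := by
  induction n with
  | zero =>
    rw [setLIntegral_openSimplex_one]
    simp only [Fin.prod_univ_erase_zero (n := 0), Fin.prod_univ_zero]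
    rw [setLIntegral_Ioo_pow_div k hx zero_le_one, mul_one, pow_one]
  | succ n ih =>
    have inner : ∀ r ∈ openSimplex (n + 1) x,
        ∫⁻ y in Ioo 0 (r 0), ENNReal.ofReal (y ^ k / ∏ i ∈ Finset.univ.erase 0, Fin.cons y r i) =
          ENNReal.ofReal (r 0 ^ k / ∏ i ∈ Finset.univ.erase 0, r i) *
            ENNReal.ofReal (1 / (k + 1)) := by
      intro r hr
      have hr₀ : 0 < r 0 := (hr.2 0).1
      have hP : 0 < ∏ i ∈ Finset.univ.erase 0, r i := Finset.prod_pos fun i _ => (hr.2 i).1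
      simp only [Fin.prod_univ_erase_zero (n := n + 1), Fin.cons_succ,
        ← Finset.mul_prod_erase Finset.univ r (Finset.mem_univ 0)]
      rw [setLIntegral_Ioo_pow_div k hr₀.le (by positivity), ← ENNReal.ofReal_mul (by positivity)]
      congr 1
      field_simp
      ring
    rw [setLIntegral_openSimplex_succ (by fun_prop)]
    simp only [Fin.cons_zero]
    rw [setLIntegral_congr_fun measurableSet_openSimplex inner, lintegral_mul_const _ (by fun_prop),
      ih, ← ENNReal.ofReal_mul (by positivity)]
    congr 1
    field_simp
    ring

theorem setLIntegral_openSimplex_eq_tsum :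
    ∫⁻ t in openSimplex (n + 1) 1,
        ENNReal.ofReal (1 / ((1 - t 0) * ∏ i ∈ Finset.univ.erase 0, t i)) =
      ∑' k : ℕ, ENNReal.ofReal (1 / ((k : ℝ) + 1) ^ (n + 1)) := calc
  _ = ∫⁻ t in openSimplex (n + 1) 1,
        ∑' k : ℕ, ENNReal.ofReal (t 0 ^ k / ∏ i ∈ Finset.univ.erase 0, t i) :=
      setLIntegral_congr_fun measurableSet_openSimplex fun t ht =>
        ofReal_one_div_one_sub_mul_eq_tsum (ht.2 0).1.le (ht.2 0).2
          (Finset.prod_nonneg fun i _ => (ht.2 i).1.le)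
  _ = ∑' k : ℕ, ∫⁻ t in openSimplex (n + 1) 1,
        ENNReal.ofReal (t 0 ^ k / ∏ i ∈ Finset.univ.erase 0, t i) :=
      lintegral_tsum fun k => by fun_prop
  _ = _ := by
      simp_rw [setLIntegral_openSimplex_pow_div_prod _ zero_le_one, one_pow]

end

/-- For every integer `n ≥ 2`, the function
`(t₁, …, t_n) ↦ 1/((1 − t₁)·t₂·t₃ ⋯ t_n)` is integrable on the open simplex
`{0 < t₁ < t₂ < ⋯ < t_n < 1} ⊂ ℝⁿ`, and its integral with respect to
`n`-dimensional Lebesgue measure equals `ζ(n)`. -/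
theorem integral_simplex_eq_zeta (n : ℕ) (hn : 2 ≤ n) :
    IntegrableOn
      (fun t : Fin n → ℝ =>
        1 / ((1 - t ⟨0, by omega⟩) * ∏ i ∈ Finset.univ.erase (⟨0, by omega⟩ : Fin n), t i))
      {t : Fin n → ℝ | StrictMono t ∧ ∀ i, t i ∈ Set.Ioo (0 : ℝ) 1} ∧
    (∫ t in {t : Fin n → ℝ | StrictMono t ∧ ∀ i, t i ∈ Set.Ioo (0 : ℝ) 1},
        1 / ((1 - t ⟨0, by omega⟩) * ∏ i ∈ Finset.univ.erase (⟨0, by omega⟩ : Fin n), t i))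
      = ∑' k : ℕ+, (1 : ℝ) / (k : ℝ) ^ n := by
  obtain ⟨n, rfl⟩ : ∃ m, n = m + 1 := ⟨n - 1, by omega⟩
  have hsum : ∑' k : ℕ, ENNReal.ofReal (1 / ((k : ℝ) + 1) ^ (n + 1)) =
      ENNReal.ofReal (∑' k : ℕ+, (1 : ℝ) / (k : ℝ) ^ (n + 1)) := by
    have hs : Summable fun k : ℕ => 1 / ((k : ℝ) + 1) ^ (n + 1) := by
      have := (summable_nat_add_iff 1).2 (Real.summable_one_div_nat_pow.2 (by omega : 1 < n + 1))
      exact_mod_cast this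
    rw [← ENNReal.ofReal_tsum_of_nonneg (fun k => by positivity) hs,
      tsum_pnat_eq_tsum_succ (f := fun k : ℕ => 1 / (k : ℝ) ^ (n + 1))]
    push_cast
    rfl
  refine integrable_and_integral_eq_of_lintegral_ofReal_eq ?_
    (by fun_prop : Measurable _).aestronglyMeasurable
    (tsum_nonneg fun k => by positivity) (setLIntegral_openSimplex_eq_tsum.trans hsum)
  filter_upwards [ae_restrict_mem measurableSet_openSimplex] with t ht
  have h₁ : 0 < 1 - t 0 := sub_pos.2 (ht.2 0).2
  have hP : 0 < ∏ i ∈ Finset.univ.erase 0, t i := Finset.prod_pos fun i _ => (ht.2 i).1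
  positivity
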